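/- Let π be a uniformly random bijection E → {1,…,m} on the edge set of a finite hypergraph H = (V,E), run the sequential greedy matching on π, and let d_1,…,d_m be a fixed (π-independent) deletion order listing all edges of E. Then for every t ∈ {1,…,m}, the expected payment satisfies E[Φ'(d_t)] ≤ 2. -/

import Mathlib

/-!
For a uniformly random priority bijection `π : E ≃ Fin m` and a fixed
(`π`-independent) deletion order `d₁,…,d_m` listing all edges of the
hypergraph, for every time `t ∈ {1,…,m}` the expected payment satisfies
`𝔼[Φ'(d_t)] ≤ 2`.

The deletion of `d_t` is early if its owner `p(d_t)` is not among
`d₁,…,d_{t-1}`; `U(d_t) = S_{p(d_t)} \ {d₁,…,d_{t-1}}`; the payment `Φ'(d_t)`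
is `1` if `d_t` is early and `d_t ≠ p(d_t)`, `|U(d_t)|` if `d_t = p(d_t)`,
and `0` if the deletion is late.
-/
open Finset

open scoped Classical

variable {V E : Type*}

/-- Two hyperedges are incident if they share a vertex. -/
def Incident [DecidableEq V] (vert : E → Finset V) (e f : E) : Prop :=
  (vert e ∩ vert f).Nonempty

/-- `Matched vert π e` holds iff the sequential greedy matching (processing the
edges in increasing `π`-order, selecting an edge iff it is still free when
processed) selects `e`. -/
def Matched [DecidableEq V] (vert : E → Finset V) (π : E → ℕ) (e : E) : Prop :=
  ∀ f, π f < π e → Incident vert f e → ¬ Matched vert π f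
termination_by π e

/-- The matched edge owning `e` (the `π`-least matched edge incident to `e`),
i.e. the matched edge `p(e)` whose sample space `e` belongs to. -/
noncomputable def owner [DecidableEq V] (vert : E → Finset V) (π : E → ℕ) (e : E) : E :=
  if h : ∃ f, (Matched vert π f ∧ Incident vert f e) ∧
      ∀ f', Matched vert π f' → Incident vert f' e → π f ≤ π f' then
    h.choose
  else e

/-- The deletion of `d_t` (the `t`-th deleted edge, `d_t = del t`) is early if
its matched edge `p(d_t)` is not among the previously deleted `d₁,…,d_{t-1}`. -/
def EarlyAt [DecidableEq V] (vert : E → Finset V) (π : E → ℕ) {m : ℕ}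
    (del : Fin m ≃ E) (t : Fin m) : Prop :=
  ∀ s : Fin m, s < t → del s ≠ owner vert π (del t)

/-- `U(d_t) = S_{p(d_t)} \ {d₁,…,d_{t-1}}`:  the edges of the sample space of
`p(d_t)` not yet deleted just before time `t`. -/
noncomputable def Uset [DecidableEq V] [DecidableEq E] [Fintype E]
    (vert : E → Finset V) (π : E → ℕ) {m : ℕ} (del : Fin m ≃ E) (t : Fin m) : Finset E :=
  Finset.univ.filter fun e =>
    owner vert π e = owner vert π (del t) ∧ ∀ s : Fin m, s < t → del s ≠ e

/-- The payment `Φ'(d_t)`:  `1` if the deletion of `d_t` is early and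
`d_t ≠ p(d_t)`, `|U(d_t)|` if `d_t = p(d_t)` (such a deletion is early), and
`0` if the deletion is late. -/
noncomputable def payment [DecidableEq V] [DecidableEq E] [Fintype E]
    (vert : E → Finset V) (π : E → ℕ) {m : ℕ} (del : Fin m ≃ E) (t : Fin m) : ℕ :=
  if EarlyAt vert π del t then
    (if del t = owner vert π (del t) then (Uset vert π del t).card else 1)
  else 0

/-!
The payment at time `t` is at most `1 + |S_{d_t}|`, where `S_a` is empty unless `a` is matched.
If `u ∈ S_a`, then exchanging the priorities of `a` and `u` makes `u` the owner of `a`: edges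
ranked before `a` are matched as before, so `u` now becomes matched and is the first matched
edge incident to `a`. Hence `(π, u) ↦ π ∘ swap a u` is injective on the pairs with `u ∈ S_a`
under `π`, so `𝔼 |S_a| ≤ 1` and `𝔼 Φ'(d_t) ≤ 2`.
-/

section Greedy

variable [DecidableEq V] {vert : E → Finset V} {π : E → ℕ}

theorem matched_iff {e : E} :
    Matched vert π e ↔ ∀ f, π f < π e → Incident vert f e → ¬ Matched vert π f := by
  rw [Matched]

theorem Incident.symm {e f : E} (h : Incident vert e f) : Incident vert f e := by
  rwa [Incident, inter_comm]

theorem incident_self {e : E} (he : (vert e).Nonempty) : Incident vert e e := by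
  simpa [Incident] using he

theorem exists_matched_incident {e : E} (he : (vert e).Nonempty) :
    ∃ f, Matched vert π f ∧ Incident vert f e := by
  by_cases h : Matched vert π e
  · exact ⟨e, h, incident_self he⟩
  · rw [matched_iff] at h
    push Not at h
    obtain ⟨f, -, hfe, hf⟩ := h
    exact ⟨f, hf, hfe⟩

theorem owner_spec {e : E} (he : (vert e).Nonempty) :
    Matched vert π (owner vert π e) ∧ Incident vert (owner vert π e) e ∧
      ∀ f, Matched vert π f → Incident vert f e → π (owner vert π e) ≤ π f := by
  obtain ⟨g, hg, hmin⟩ := (InvImage.wf π wellFounded_lt).has_min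
    {f | Matched vert π f ∧ Incident vert f e} (exists_matched_incident he)
  have h : ∃ f, (Matched vert π f ∧ Incident vert f e) ∧
      ∀ f', Matched vert π f' → Incident vert f' e → π f ≤ π f' :=
    ⟨g, hg, fun f hf hfe => not_lt.mp (hmin f ⟨hf, hfe⟩)⟩
  rw [owner, dif_pos h]
  exact ⟨h.choose_spec.1.1, h.choose_spec.1.2, h.choose_spec.2⟩

theorem owner_eq_of_forall_le (hπ : Function.Injective π) {e f : E} (he : (vert e).Nonempty)
    (hf : Matched vert π f) (hfe : Incident vert f e)
    (hmin : ∀ f', Matched vert π f' → Incident vert f' e → π f ≤ π f') :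
    owner vert π e = f := by
  obtain ⟨hM, hI, hle⟩ := owner_spec (π := π) he
  exact hπ (le_antisymm (hle f hf hfe) (hmin _ hM hI))

theorem Matched.le_of_incident {a f : E} (ha : Matched vert π a) (hf : Matched vert π f)
    (hfa : Incident vert f a) : π a ≤ π f :=
  not_lt.mp fun hlt => matched_iff.mp ha f hlt hfa hf

theorem Matched.owner_eq (hπ : Function.Injective π) {e : E} (he : (vert e).Nonempty)
    (h : Matched vert π e) : owner vert π e = e :=
  owner_eq_of_forall_le hπ he h (incident_self he) fun _ hf hfe => h.le_of_incident hf hfe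

theorem owner_lt_of_not_matched {e : E} (he : (vert e).Nonempty) (h : ¬ Matched vert π e) :
    π (owner vert π e) < π e := by
  rw [matched_iff] at h
  push Not at h
  obtain ⟨f, hlt, hfe, hf⟩ := h
  exact ((owner_spec he).2.2 f hf hfe).trans_lt hlt

theorem matched_congr {π' : E → ℕ} {N : ℕ} (h : ∀ f, π f < N ∨ π' f < N → π f = π' f) :
    ∀ e, π e < N → (Matched vert π e ↔ Matched vert π' e) := by
  suffices ∀ k e, π e = k → π e < N → (Matched vert π e ↔ Matched vert π' e) from
    fun e => this _ e rfl
  intro k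
  induction k using Nat.strong_induction_on with
  | _ k ih =>
    intro e rfl he
    have hee := h e (.inl he)
    rw [matched_iff, matched_iff]
    constructor
    · intro H f hf hfe hf'
      have hff := h f (.inr (by omega))
      exact H f (by omega) hfe ((ih _ (by omega) f rfl (by omega)).2 hf')
    · intro H f hf hfe hf'
      have hff := h f (.inl (by omega))
      exact H f (by omega) hfe ((ih _ (by omega) f rfl (by omega)).1 hf')

theorem owner_comp_swap [DecidableEq E] (hne : ∀ e, (vert e).Nonempty)
    (hπ : Function.Injective π) {a u : E} (hu : owner vert π u = a) :
    owner vert (π ∘ Equiv.swap a u) a = u := by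
  obtain ⟨haM, hau, humin⟩ := owner_spec (π := π) (hne u)
  rw [hu] at haM hau humin
  rcases eq_or_ne u a with rfl | hua
  · simpa using haM.owner_eq hπ (hne u)
  have hlt : π a < π u := hu ▸ owner_lt_of_not_matched (hne u)
    fun h => hua ((h.owner_eq hπ (hne u)).symm.trans hu)
  have hlow : ∀ f, π f < π a ∨ (π ∘ Equiv.swap a u) f < π a →
      π f = (π ∘ Equiv.swap a u) f := by
    intro f hf
    rcases eq_or_ne f a with rfl | hfa
    · simp at hf; omega
    rcases eq_or_ne f u with rfl | hfu
    · simp at hf; omega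
    simp [Equiv.swap_apply_of_ne_of_ne hfa hfu]
  have hswap_u : (π ∘ Equiv.swap a u) u = π a := by simp
  have hsame := matched_congr (vert := vert) hlow
  have huM : Matched vert (π ∘ Equiv.swap a u) u := by
    refine matched_iff.mpr fun f hf hfu hf' => ?_
    have hff := hlow f (.inr (by omega))
    exact absurd (humin f ((hsame f (by omega)).2 hf') hfu) (by omega)
  refine owner_eq_of_forall_le (hπ.comp (Equiv.swap a u).injective) (hne a) huM hau.symm ?_
  intro f hf hfa
  by_contra! hf'
  have hff := hlow f (.inr (by omega))
  exact absurd (haM.le_of_incident ((hsame f (by omega)).2 hf) hfa) (by omega)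

end Greedy

section Counting

variable [DecidableEq V] [Fintype E] [DecidableEq E] {vert : E → Finset V}

/-- The sample space `S_a`; it is empty unless `a` is matched. -/
noncomputable def sampleSpace (vert : E → Finset V) (π : E → ℕ) (a : E) : Finset E :=
  univ.filter fun e => owner vert π e = a

theorem Uset_subset_sampleSpace (π : E → ℕ) {m : ℕ} (del : Fin m ≃ E) (t : Fin m) :
    Uset vert π del t ⊆ sampleSpace vert π (owner vert π (del t)) := by
  intro e he
  simp only [Uset, sampleSpace, mem_filter] at he ⊢
  exact ⟨he.1, he.2.1⟩

theorem payment_le_card_sampleSpace_add_one (π : E → ℕ) {m : ℕ} (del : Fin m ≃ E)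
    (t : Fin m) : payment vert π del t ≤ #(sampleSpace vert π (del t)) + 1 := by
  unfold payment
  split_ifs with _ hown
  · have := card_le_card (Uset_subset_sampleSpace (vert := vert) π del t)
    rw [← hown] at this
    omega
  all_goals omega

theorem sum_card_sampleSpace_le (hne : ∀ e, (vert e).Nonempty) {m : ℕ} (a : E) :
    ∑ π : E ≃ Fin m, #(sampleSpace vert (fun e => (π e : ℕ)) a) ≤
      Fintype.card (E ≃ Fin m) := by
  have hswap : ∀ (π : E ≃ Fin m) (u : E), u ∈ sampleSpace vert (fun e => (π e : ℕ)) a →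
      owner vert (fun e => ((Equiv.swap a u).trans π e : ℕ)) a = u := by
    intro π u hu
    simp only [sampleSpace, mem_filter, mem_univ, true_and] at hu
    exact owner_comp_swap hne (Fin.val_injective.comp π.injective) hu
  rw [← card_sigma, ← card_univ]
  refine card_le_card_of_injOn (fun p => (Equiv.swap a p.2).trans p.1)
    (fun _ _ => mem_coe.mpr (mem_univ _)) ?_
  rintro ⟨π, u⟩ hu ⟨σ, v⟩ hv h
  simp only [coe_sigma, Set.mem_sigma_iff, mem_univ, mem_coe, true_and] at hu hv h
  obtain rfl : u = v := by rw [← hswap π u hu, ← hswap σ v hv, h]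
  obtain rfl : π = σ := Equiv.ext fun x => by
    simpa using congrArg (· (Equiv.swap a u x)) h
  rfl

end Counting

theorem stmt12_general [DecidableEq V] [Fintype E] [DecidableEq E] {m : ℕ}
    (vert : E → Finset V) (hne : ∀ e : E, (vert e).Nonempty)
    (del : Fin m ≃ E) (t : Fin m) :
    (∑ π : E ≃ Fin m, (payment vert (fun e => (π e : ℕ)) del t : ℝ))
        / (Fintype.card (E ≃ Fin m) : ℝ) ≤ 2 := by
  have hsum : ∑ π : E ≃ Fin m, payment vert (fun e => (π e : ℕ)) del t ≤
      2 * Fintype.card (E ≃ Fin m) :=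
    calc ∑ π : E ≃ Fin m, payment vert (fun e => (π e : ℕ)) del t
        ≤ ∑ π : E ≃ Fin m, (#(sampleSpace vert (fun e => (π e : ℕ)) (del t)) + 1) :=
          sum_le_sum fun π _ => payment_le_card_sampleSpace_add_one _ del t
      _ = ∑ π : E ≃ Fin m, #(sampleSpace vert (fun e => (π e : ℕ)) (del t)) +
            Fintype.card (E ≃ Fin m) := by
          rw [sum_add_distrib, sum_const, card_univ, smul_eq_mul, mul_one]
      _ ≤ 2 * Fintype.card (E ≃ Fin m) := by
          have := sum_card_sampleSpace_le hne (m := m) (del t)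
          omega
  exact div_le_of_le_mul₀ (by positivity) zero_le_two (by exact_mod_cast hsum)

theorem stmt12 [DecidableEq V] [Fintype E] [DecidableEq E] {m : ℕ}
    (vert : E → Finset V) (hne : ∀ e : E, (vert e).Nonempty)
    (hm : Fintype.card E = m) (del : Fin m ≃ E) (t : Fin m) :
    (∑ π : E ≃ Fin m, (payment vert (fun e => (π e : ℕ)) del t : ℝ))
        / (Fintype.card (E ≃ Fin m) : ℝ) ≤ 2 :=
  stmt12_general vert hne del t
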